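/- arXiv:1610.07712 — 6 statements merged into one kernel-verified Lean document; each statement's English description precedes it below -/
import Mathlib

section
/- Let m > 1 be an integer and p ≡ 1 (mod m) a prime. Let f : [0,1] → ℝ be a function with Fourier coefficients (a_n)_{n∈ℤ} such that f(x) = ∑_{n=-∞}^{∞} a_n e^{2πinx} pointwise for all x ∈ (0,1), and suppose S(f) = ∑_{n≠0} |a_n| converges. Then |∑_{k ∈ R_m} f(k/p) − (1/m) ∑_{k=1}^{p-1} f(k/p)| ≤ (1 − 1/m) S(f) √p. -/
/-!
On `𝔽_p` put `w x = 1_{R_m}(x) - 1/m` for `x ≠ 0` and `w 0 = 0`. Sampling the Fourier series of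
`f` at `k/p` turns the left-hand side into `∑ₙ aₙ ŵ(n)` with `ŵ(n) = ∑ₓ w(x) e(nx/p)`. As
`m ∣ p - 1`, exactly `m` multiplicative characters are trivial on the `m`-th powers, and
orthogonality gives `w = (1/m) ∑ χ` over the `m - 1` nontrivial ones. So `ŵ(n)` is `1/m` times
`m - 1` Gauss sums, each of absolute value `√p` for `n ≠ 0` and vanishing for `n = 0`: hence
`ŵ(0) = 0` and `|ŵ(n)| ≤ (1 - 1/m)√p`.
-/

open Complex Finset

theorem ZMod.natCast_ne_zero_of_mem_Icc {N k : ℕ} (hk : k ∈ Icc 1 (N - 1)) : (k : ZMod N) ≠ 0 := by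
  rw [mem_Icc] at hk
  rw [Ne, ZMod.natCast_eq_zero_iff]
  exact Nat.not_dvd_of_pos_of_lt hk.1 (by omega)

theorem ZMod.sum_Icc_natCast_eq_sum {M : Type*} [AddCommMonoid M] {N : ℕ} [NeZero N]
    (g : ZMod N → M) (hg : g 0 = 0) : ∑ k ∈ Icc 1 (N - 1), g k = ∑ x, g x := by
  rw [← sum_erase _ hg]
  refine sum_nbij' (↑) ZMod.val (fun k hk ↦ ?_) (fun x hx ↦ ?_) (fun k hk ↦ ?_) (fun x _ ↦ ?_)
    (fun _ _ ↦ rfl)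
  · simpa using ZMod.natCast_ne_zero_of_mem_Icc hk
  · have := ZMod.val_lt x
    simp only [mem_erase, ne_eq, mem_univ, and_true, ← ZMod.val_eq_zero] at hx
    rw [mem_Icc]
    omega
  · rw [mem_Icc] at hk
    exact ZMod.val_cast_of_lt (by omega)
  · simp

theorem ZMod.stdAddChar_intCast_mul_natCast {N : ℕ} [NeZero N] (n : ℤ) (k : ℕ) :
    ZMod.stdAddChar ((n : ZMod N) * (k : ZMod N)) =
      exp (2 * Real.pi * I * n * ((k / N : ℝ) : ℂ)) := by
  rw [← Int.cast_natCast k, ← Int.cast_mul, ZMod.stdAddChar_coe]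
  push_cast
  ring_nf

theorem sum_mul_eq_tsum_mul_sum_stdAddChar {N : ℕ} [NeZero N] {g : ℝ → ℂ} {a : ℤ → ℂ}
    (hg : ∀ x ∈ Set.Ioo (0 : ℝ) 1,
      g x = ∑' n : ℤ, a n * exp (2 * Real.pi * I * (n : ℂ) * (x : ℂ)))
    (ha : Summable fun n ↦ ‖a n‖) (w : ZMod N → ℂ) (hw : w 0 = 0) :
    ∑ k ∈ Icc 1 (N - 1), w k * g (k / N) =
      ∑' n : ℤ, a n * ∑ x, w x * ZMod.stdAddChar ((n : ZMod N) * x) := by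
  have hsample : ∀ k ∈ Icc 1 (N - 1),
      g (k / N) = ∑' n : ℤ, a n * ZMod.stdAddChar ((n : ZMod N) * (k : ZMod N)) := by
    intro k hk
    rw [mem_Icc] at hk
    have hN : (0 : ℝ) < N := Nat.cast_pos.mpr (NeZero.pos N)
    have hx : (k / N : ℝ) ∈ Set.Ioo 0 1 :=
      ⟨div_pos (Nat.cast_pos.mpr hk.1) hN, (div_lt_one hN).mpr (by norm_cast; omega)⟩
    simp_rw [hg _ hx, ZMod.stdAddChar_intCast_mul_natCast]
  have hsummable (x : ZMod N) : Summable fun n : ℤ ↦ a n * ZMod.stdAddChar ((n : ZMod N) * x) :=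
    ha.of_norm_bounded fun n ↦ by simp
  calc ∑ k ∈ Icc 1 (N - 1), w k * g (k / N)
      = ∑ k ∈ Icc 1 (N - 1), ∑' n : ℤ,
          w k * (a n * ZMod.stdAddChar ((n : ZMod N) * (k : ZMod N))) := by
        refine sum_congr rfl fun k hk ↦ ?_
        rw [hsample k hk, tsum_mul_left]
    _ = ∑' n : ℤ, ∑ k ∈ Icc 1 (N - 1),
          w k * (a n * ZMod.stdAddChar ((n : ZMod N) * (k : ZMod N))) :=
        (Summable.tsum_finsetSum fun (k : ℕ) _ ↦ (hsummable k).mul_left (w k)).symm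
    _ = ∑' n : ℤ, a n * ∑ x, w x * ZMod.stdAddChar ((n : ZMod N) * x) := by
        refine tsum_congr fun n ↦ ?_
        rw [mul_sum, ZMod.sum_Icc_natCast_eq_sum
          (fun x ↦ w x * (a n * ZMod.stdAddChar ((n : ZMod N) * x))) (by simp [hw])]
        exact sum_congr rfl fun x _ ↦ by ring

theorem norm_tsum_mul_le_of_apply_eq_zero {ι : Type*} {a b : ι → ℂ} {i₀ : ι} {C : ℝ}
    (ha : Summable fun i : {i // i ≠ i₀} ↦ ‖a i‖) (hb₀ : b i₀ = 0) (hb : ∀ i, ‖b i‖ ≤ C) :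
    ‖∑' i, a i * b i‖ ≤ C * ∑' i : {i // i ≠ i₀}, ‖a i‖ := by
  have hsupp : Function.support (fun i ↦ a i * b i) ⊆ {i | i ≠ i₀} := by
    rintro i hi rfl
    simp [hb₀] at hi
  rw [← tsum_subtype_eq_of_support_subset hsupp]
  refine tsum_of_norm_bounded (ha.hasSum.mul_left C) fun i ↦ ?_
  rw [norm_mul, mul_comm]
  exact mul_le_mul_of_nonneg_right (hb i) (norm_nonneg _)

namespace MulChar

variable {M R : Type*} [CommMonoid M] [Finite M] [CommRing R] [IsDomain R]
  [HasEnoughRootsOfUnity R (Monoid.exponent Mˣ)]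

open scoped Classical in
theorem sum_subgroupOrderIsoSubgroupMulChar_apply (H : Subgroup Mˣ)
    [Fintype (subgroupOrderIsoSubgroupMulChar M R H).ofDual] (u : Mˣ) :
    ∑ χ : (subgroupOrderIsoSubgroupMulChar M R H).ofDual, (χ : MulChar M R) u =
      if u ∈ H then (Nat.card (Mˣ ⧸ H) : R) else 0 := by
  split_ifs with hu
  · have hone (χ : (subgroupOrderIsoSubgroupMulChar M R H).ofDual) : (χ : MulChar M R) u = 1 :=
      mem_subgroupOrderIsoSubgroupMulChar_iff.mp χ.2 u hu
    rw [sum_congr rfl fun χ _ ↦ hone χ, sum_const, card_univ, nsmul_one,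
      ← card_subgroupOrderIsoSubgroupMulChar (R := R), Nat.card_eq_fintype_card]
  · obtain ⟨χ₀, hχ₀, hχ₀u⟩ : ∃ χ₀ ∈ (subgroupOrderIsoSubgroupMulChar M R H).ofDual, χ₀ u ≠ 1 := by
      have hdual := mem_subgroupOrderIsoSubgroupMulChar_symm_iff
        (X := (subgroupOrderIsoSubgroupMulChar M R H).ofDual) (m := u)
      rw [OrderDual.toDual_ofDual, OrderIso.symm_apply_apply] at hdual
      simpa [hdual] using hu
    have hshift : χ₀ u * ∑ χ : (subgroupOrderIsoSubgroupMulChar M R H).ofDual, (χ : MulChar M R) u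
        = ∑ χ : (subgroupOrderIsoSubgroupMulChar M R H).ofDual, (χ : MulChar M R) u := by
      rw [mul_sum]
      exact Fintype.sum_equiv (Equiv.mulLeft ⟨χ₀, hχ₀⟩) _ _ fun χ ↦ by simp
    exact (mul_left_eq_self₀.mp hshift).resolve_left hχ₀u

end MulChar

open scoped Classical in
noncomputable def powerResidueWeight {M₀ : Type*} [MonoidWithZero M₀] (m : ℕ) (x : M₀) : ℂ :=
  (if ∃ y : M₀, y ≠ 0 ∧ y ^ m = x then 1 else 0) - if x = 0 then 0 else 1 / (m : ℂ)

@[simp]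
theorem powerResidueWeight_zero {M₀ : Type*} [MonoidWithZero M₀] [NoZeroDivisors M₀] (m : ℕ) :
    powerResidueWeight m (0 : M₀) = 0 := by
  rw [powerResidueWeight, if_neg fun ⟨y, hy, hy0⟩ ↦ pow_ne_zero m hy hy0, if_pos rfl, sub_self]

open scoped Classical in
theorem ofReal_sum_filter_sub_eq_sum_powerResidueWeight (N m : ℕ) (g : ℕ → ℝ) :
    (((∑ k ∈ (Icc 1 (N - 1)).filter
          (fun k : ℕ => ∃ x : ZMod N, x ≠ 0 ∧ x ^ m = (k : ZMod N)), g k)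
        - 1 / m * ∑ k ∈ Icc 1 (N - 1), g k : ℝ) : ℂ) =
      ∑ k ∈ Icc 1 (N - 1), powerResidueWeight m (k : ZMod N) * g k := by
  rw [sum_filter, mul_sum, ← sum_sub_distrib]
  push_cast
  refine sum_congr rfl fun k hk ↦ ?_
  rw [powerResidueWeight, if_neg (ZMod.natCast_ne_zero_of_mem_Icc hk)]
  split_ifs <;> push_cast <;> ring

section FiniteField

variable {F : Type*} [Field F] [Fintype F]

theorem norm_gaussSum_eq_sqrt_card {χ : MulChar F ℂ} (hχ : χ ≠ 1) {ψ : AddChar F ℂ}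
    (hψ : ψ.IsPrimitive) : ‖gaussSum χ ψ‖ = √(Fintype.card F) := by
  have hsq : (‖gaussSum χ ψ‖ ^ 2 : ℂ) = Fintype.card F := by
    rw [← Complex.mul_conj', starRingEnd_apply, star_gaussSum_eq,
      gaussSum_mul_gaussSum_eq_card hχ hψ]
  rw [eq_comm, Real.sqrt_eq_iff_eq_sq (by positivity) (norm_nonneg _)]
  exact_mod_cast hsq.symm

theorem norm_gaussSum_mulShift_le {χ : MulChar F ℂ} (hχ : χ ≠ 1) {ψ : AddChar F ℂ}
    (hψ : ψ.IsPrimitive) (t : F) : ‖gaussSum χ (ψ.mulShift t)‖ ≤ √(Fintype.card F) := by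
  rcases eq_or_ne t 0 with rfl | ht
  · simp [gaussSum_one_right hχ]
  · exact (norm_gaussSum_eq_sqrt_card hχ (.of_ne_one (hψ ht))).le

theorem pos_of_dvd_card_sub_one {m : ℕ} (hm : m ∣ Fintype.card F - 1) : 0 < m :=
  Nat.pos_of_dvd_of_pos hm (Nat.sub_pos_of_lt Fintype.one_lt_card)

-- The characters trivial on the `m`-th powers, i.e. those with `χ ^ m = 1`.
variable (F) in
noncomputable abbrev powerResidueDual (m : ℕ) : Subgroup (MulChar F ℂ) :=
  (MulChar.subgroupOrderIsoSubgroupMulChar F ℂ (powMonoidHom m : Fˣ →* Fˣ).range).ofDual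

theorem index_range_powMonoidHom {m : ℕ} (hm : m ∣ Fintype.card F - 1) :
    (powMonoidHom m : Fˣ →* Fˣ).range.index = m := by
  classical
  rw [IsCyclic.index_powMonoidHom_range, Nat.card_eq_fintype_card, Fintype.card_units,
    Nat.gcd_eq_right hm]

theorem card_powerResidueDual {m : ℕ} (hm : m ∣ Fintype.card F - 1) :
    Nat.card (powerResidueDual F m) = m := by
  rw [MulChar.card_subgroupOrderIsoSubgroupMulChar, ← Subgroup.index, index_range_powMonoidHom hm]

theorem powerResidueWeight_eq_sum {m : ℕ} (hm : m ∣ Fintype.card F - 1)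
    [Fintype (powerResidueDual F m)] (x : F) :
    powerResidueWeight m x =
      1 / m * ∑ χ ∈ univ.erase (1 : powerResidueDual F m), (χ : MulChar F ℂ) x := by
  classical
  rcases eq_or_ne x 0 with rfl | hx
  · simp [powerResidueWeight, MulChar.map_zero]
  have hm0 : (m : ℂ) ≠ 0 := Nat.cast_ne_zero.mpr (pos_of_dvd_card_sub_one hm).ne'
  have hpow : (∃ y : F, y ≠ 0 ∧ y ^ m = x) ↔
      Units.mk0 x hx ∈ (powMonoidHom m : Fˣ →* Fˣ).range := by
    simp only [MonoidHom.mem_range, powMonoidHom_apply, Units.ext_iff, Units.val_pow_eq_pow_val,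
      Units.val_mk0]
    exact ⟨fun ⟨y, hy, hyx⟩ ↦ ⟨Units.mk0 y hy, hyx⟩, fun ⟨y, hyx⟩ ↦ ⟨y, y.ne_zero, hyx⟩⟩
  have hsum := MulChar.sum_subgroupOrderIsoSubgroupMulChar_apply (R := ℂ)
    (powMonoidHom m : Fˣ →* Fˣ).range (Units.mk0 x hx)
  rw [← Subgroup.index, index_range_powMonoidHom hm, Units.val_mk0] at hsum
  rw [sum_erase_eq_sub (mem_univ _), hsum, powerResidueWeight, if_neg hx, OneMemClass.coe_one,
    MulChar.one_apply (isUnit_iff_ne_zero.mpr hx)]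
  simp only [hpow]
  split_ifs
  · field_simp
  · field_simp; ring

theorem sum_powerResidueWeight_mul_eq {m : ℕ} (hm : m ∣ Fintype.card F - 1)
    [Fintype (powerResidueDual F m)] (ψ : AddChar F ℂ) (t : F) :
    ∑ x, powerResidueWeight m x * ψ (t * x) =
      1 / m * ∑ χ ∈ univ.erase (1 : powerResidueDual F m), gaussSum χ (ψ.mulShift t) := by
  simp_rw [powerResidueWeight_eq_sum hm, gaussSum, AddChar.mulShift_apply, mul_assoc, ← mul_sum,
    sum_mul]
  rw [sum_comm]

theorem sum_powerResidueWeight {m : ℕ} (hm : m ∣ Fintype.card F - 1) :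
    ∑ x : F, powerResidueWeight m x = 0 := by
  have := Fintype.ofFinite (powerResidueDual F m)
  have h := sum_powerResidueWeight_mul_eq hm 1 0
  simp only [AddChar.one_apply, mul_one, AddChar.mulShift_zero] at h
  rw [h, sum_eq_zero fun χ hχ ↦ gaussSum_one_right (by simpa using ne_of_mem_erase hχ), mul_zero]

theorem norm_sum_powerResidueWeight_mul_le {m : ℕ} (hm : m ∣ Fintype.card F - 1)
    {ψ : AddChar F ℂ} (hψ : ψ.IsPrimitive) (t : F) :
    ‖∑ x, powerResidueWeight m x * ψ (t * x)‖ ≤ (1 - 1 / m) * √(Fintype.card F) := by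
  have := Fintype.ofFinite (powerResidueDual F m)
  have hm0 : m ≠ 0 := (pos_of_dvd_card_sub_one hm).ne'
  have hcard : #(univ.erase (1 : powerResidueDual F m)) = m - 1 := by
    rw [card_erase_of_mem (mem_univ _), card_univ, ← Nat.card_eq_fintype_card,
      card_powerResidueDual hm]
  rw [sum_powerResidueWeight_mul_eq hm, norm_mul]
  calc ‖(1 / m : ℂ)‖ * ‖∑ χ ∈ univ.erase (1 : powerResidueDual F m), gaussSum χ (ψ.mulShift t)‖
      ≤ 1 / m * ∑ χ ∈ univ.erase (1 : powerResidueDual F m), √(Fintype.card F) := by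
        rw [norm_div, norm_one, Complex.norm_natCast]
        gcongr with χ hχ
        exact (norm_sum_le _ _).trans (sum_le_sum fun χ hχ ↦
          norm_gaussSum_mulShift_le (by simpa using ne_of_mem_erase hχ) hψ t)
    _ = (1 - 1 / m) * √(Fintype.card F) := by
        rw [sum_const, hcard, nsmul_eq_mul, Nat.cast_sub (Nat.one_le_iff_ne_zero.mpr hm0)]
        field_simp
        ring

end FiniteField

open scoped Classical in
theorem residue_sum_fourier_bound_general (m p : ℕ) (hp : p.Prime) (hpm : p % m = 1)
    (f : ℝ → ℝ) (a : ℤ → ℂ)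
    (hf : ∀ x ∈ Set.Ioo (0 : ℝ) 1,
      (f x : ℂ) = ∑' n : ℤ, a n * Complex.exp (2 * Real.pi * Complex.I * (n : ℂ) * (x : ℂ)))
    (hS : Summable fun n : {n : ℤ // n ≠ 0} => ‖a n‖) :
    |(∑ k ∈ (Finset.Icc 1 (p - 1)).filter
          (fun k : ℕ => ∃ x : ZMod p, x ≠ 0 ∧ x ^ m = ((k : ℕ) : ZMod p)), f ((k : ℝ) / p))
        - (1 / m) * ∑ k ∈ Finset.Icc 1 (p - 1), f ((k : ℝ) / p)|
      ≤ (1 - 1 / m) * (∑' n : {n : ℤ // n ≠ 0}, ‖a n‖) * Real.sqrt p := by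
  have := Fact.mk hp
  have hmp : m ∣ Fintype.card (ZMod p) - 1 := by
    simpa [ZMod.card, hpm] using Nat.dvd_sub_mod (n := m) p
  have hW₀ : ∑ x : ZMod p,
      powerResidueWeight m x * ZMod.stdAddChar (((0 : ℤ) : ZMod p) * x) = 0 := by
    simpa using sum_powerResidueWeight hmp
  have hW (n : ℤ) := norm_sum_powerResidueWeight_mul_le hmp (ZMod.isPrimitive_stdAddChar p) n
  simp only [ZMod.card] at hW
  rw [← Real.norm_eq_abs, ← Complex.norm_real, ofReal_sum_filter_sub_eq_sum_powerResidueWeight,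
    sum_mul_eq_tsum_mul_sum_stdAddChar hf ((Set.finite_singleton 0).summable_compl_iff.mp hS) _
      (powerResidueWeight_zero m)]
  calc _ ≤ (1 - 1 / m) * √p * ∑' n : {n : ℤ // n ≠ 0}, ‖a n‖ :=
        norm_tsum_mul_le_of_apply_eq_zero hS hW₀ hW
    _ = _ := by ring

open scoped Classical in
/-- Let `m > 1` and `p ≡ 1 (mod m)` prime. If `f : [0,1] → ℝ` has a pointwise convergent
Fourier series `f(x) = ∑ aₙ e^{2πinx}` on `(0,1)` with `S(f) = ∑_{n≠0} |aₙ| < ∞`, then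
`|∑_{k ∈ R_m} f(k/p) − (1/m) ∑_{k=1}^{p-1} f(k/p)| ≤ (1 − 1/m) S(f) √p`. -/
theorem residue_sum_fourier_bound (m p : ℕ) (hm : 1 < m) (hp : p.Prime) (hpm : p % m = 1)
    (f : ℝ → ℝ) (a : ℤ → ℂ)
    (hf : ∀ x ∈ Set.Ioo (0 : ℝ) 1,
      (f x : ℂ) = ∑' n : ℤ, a n * Complex.exp (2 * Real.pi * Complex.I * (n : ℂ) * (x : ℂ)))
    (hS : Summable fun n : {n : ℤ // n ≠ 0} => ‖a n‖) :
    |(∑ k ∈ (Finset.Icc 1 (p - 1)).filter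
          (fun k : ℕ => ∃ x : ZMod p, x ≠ 0 ∧ x ^ m = ((k : ℕ) : ZMod p)), f ((k : ℝ) / p))
        - (1 / m) * ∑ k ∈ Finset.Icc 1 (p - 1), f ((k : ℝ) / p)|
      ≤ (1 - 1 / m) * (∑' n : {n : ℤ // n ≠ 0}, ‖a n‖) * Real.sqrt p :=
  residue_sum_fourier_bound_general m p hp hpm f a hf hS
end

section
/- Let t and x be real numbers with 0 < t ≤ 1 and 0 < x < 1. Then ∑_{n=1}^{∞} t^n sin(2πnx)/n = arctan( t sin(2πx) / (1 − t cos(2πx)) ). -/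
/-!
For `|t| < 1` the series is the imaginary part of `-log (1 - t e^{iθ})`, i.e. `-arg (1 - t e^{iθ})`,
and since `1 - t e^{iθ}` has positive real part this argument is an arctangent. At `t = 1` the
partial sums of `sin (nθ)` are bounded when `e^{iθ} ≠ 1`, so Dirichlet's test makes the series
converge, and Abel's theorem identifies its sum with the limit of the arctangent as `t → 1⁻`.
-/

open Filter Finset Real Topology

lemma Complex.arg_eq_arctan_of_re_pos {z : ℂ} (hz : 0 < z.re) :
    Complex.arg z = Real.arctan (z.im / z.re) := by
  have harg := abs_lt.mp (Complex.abs_arg_lt_pi_div_two_iff.mpr (Or.inl hz))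
  rw [← Complex.tan_arg, Real.arctan_tan harg.1 harg.2]

lemma Complex.exp_ofReal_mul_I_pow (θ : ℝ) (n : ℕ) :
    Complex.exp (θ * Complex.I) ^ n = Complex.exp ((n * θ : ℝ) * Complex.I) := by
  rw [← Complex.exp_nat_mul]
  push_cast
  ring_nf

lemma norm_geom_sum_le {𝕜 : Type*} [NormedField 𝕜] {w : 𝕜} (hw : ‖w‖ ≤ 1) (hw1 : w ≠ 1)
    (N : ℕ) : ‖∑ n ∈ range N, w ^ n‖ ≤ 2 / ‖w - 1‖ := by
  have hnum : ‖w ^ N - 1‖ ≤ 2 := calc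
    ‖w ^ N - 1‖ ≤ ‖w‖ ^ N + ‖(1 : 𝕜)‖ := by rw [← norm_pow]; exact norm_sub_le _ _
    _ ≤ 2 := by rw [norm_one]; linarith [pow_le_one₀ (norm_nonneg w) hw (n := N)]
  rw [geom_sum_eq hw1, norm_div]
  gcongr

lemma abs_sum_range_sin_mul_le {θ : ℝ} (hθ : cos θ ≠ 1) (N : ℕ) :
    |∑ n ∈ range N, sin (n * θ)| ≤ 2 / ‖Complex.exp (θ * Complex.I) - 1‖ := by
  have hw1 : Complex.exp (θ * Complex.I) ≠ 1 := fun h ↦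
    hθ (by simpa [Complex.exp_ofReal_mul_I_re] using congrArg Complex.re h)
  have him :
      ∑ n ∈ range N, sin (n * θ) = (∑ n ∈ range N, Complex.exp (θ * Complex.I) ^ n).im := by
    simp only [Complex.im_sum, Complex.exp_ofReal_mul_I_pow, Complex.exp_ofReal_mul_I_im]
  rw [him]
  exact (Complex.abs_im_le_norm _).trans
    (norm_geom_sum_le (Complex.norm_exp_ofReal_mul_I θ).le hw1 N)

lemma cauchySeq_sum_sin_mul_div {θ : ℝ} (hθ : cos θ ≠ 1) :
    CauchySeq fun N ↦ ∑ n ∈ range N, sin (n * θ) / n := by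
  have hanti : Antitone fun n : ℕ ↦ ((n : ℝ) + 1)⁻¹ := fun a b hab ↦
    inv_anti₀ (by positivity) (by gcongr)
  have hzero : Tendsto (fun n : ℕ ↦ ((n : ℝ) + 1)⁻¹) atTop (𝓝 0) := by
    simpa only [one_div] using tendsto_one_div_add_atTop_nhds_zero_nat (𝕜 := ℝ)
  have hbdd (N : ℕ) : ‖∑ n ∈ range N, sin ((n + 1 : ℕ) * θ)‖ ≤
      2 / ‖Complex.exp (θ * Complex.I) - 1‖ := by
    have := abs_sum_range_sin_mul_le hθ (N + 1)
    rwa [sum_range_succ', Nat.cast_zero, zero_mul, sin_zero, add_zero] at this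
  rw [← cauchySeq_shift 1]
  convert hanti.cauchySeq_series_mul_of_tendsto_zero_of_bounded hzero hbdd using 2 with N
  rw [sum_range_succ']
  simp [div_eq_inv_mul]

lemma hasSum_pow_mul_sin_mul_div {t θ : ℝ} (ht : |t| < 1) :
    HasSum (fun n : ℕ ↦ t ^ n * sin (n * θ) / n) (arctan (t * sin θ / (1 - t * cos θ))) := by
  set z : ℂ := t * Complex.exp (θ * Complex.I)
  have hz : ‖z‖ < 1 := by simpa [z] using ht
  have hterm (n : ℕ) : (z ^ n / n).im = t ^ n * sin (n * θ) / n := by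
    rw [mul_pow, Complex.exp_ofReal_mul_I_pow, ← Complex.ofReal_pow, ← Complex.ofReal_natCast,
      Complex.div_ofReal_im, Complex.im_ofReal_mul, Complex.exp_ofReal_mul_I_im]
  have hre : (1 - z).re = 1 - t * cos θ := by simp [z, Complex.exp_ofReal_mul_I_re]
  have him : (1 - z).im = -(t * sin θ) := by simp [z, Complex.exp_ofReal_mul_I_im]
  have hre_pos : 0 < (1 - z).re := by
    have : t * cos θ < 1 := calc
      t * cos θ ≤ |t| * |cos θ| := (le_abs_self _).trans (abs_mul _ _).le
      _ ≤ |t| := mul_le_of_le_one_right (abs_nonneg t) (abs_cos_le_one θ)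
      _ < 1 := ht
    linarith
  have hlog : (-Complex.log (1 - z)).im = arctan (t * sin θ / (1 - t * cos θ)) := by
    rw [Complex.neg_im, Complex.log_im, Complex.arg_eq_arctan_of_re_pos hre_pos, hre, him,
      neg_div, arctan_neg, neg_neg]
  simpa only [hterm, hlog] using Complex.hasSum_im (Complex.hasSum_taylorSeries_neg_log hz)

lemma tendsto_sum_sin_mul_div {θ : ℝ} (hθ : cos θ ≠ 1) :
    Tendsto (fun N ↦ ∑ n ∈ range N, sin (n * θ) / n) atTop
      (𝓝 (arctan (sin θ / (1 - cos θ)))) := by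
  obtain ⟨l, hl⟩ := cauchySeq_tendsto_of_complete (cauchySeq_sum_sin_mul_div hθ)
  have habel := Real.tendsto_tsum_powerSeries_nhdsWithin_lt hl
  have hpower : (fun t ↦ ∑' n : ℕ, sin (n * θ) / n * t ^ n) =ᶠ[𝓝[<] 1]
      fun t ↦ arctan (t * sin θ / (1 - t * cos θ)) := by
    filter_upwards [Ioo_mem_nhdsLT (show (-1 : ℝ) < 1 by norm_num)] with t ht
    rw [← (hasSum_pow_mul_sin_mul_div (θ := θ) (abs_lt.mpr ht)).tsum_eq]
    exact tsum_congr fun n ↦ by ring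
  have hcont : ContinuousAt (fun t ↦ arctan (t * sin θ / (1 - t * cos θ))) 1 := by
    have hden : (1 : ℝ) - 1 * cos θ ≠ 0 := by rw [one_mul, sub_ne_zero]; exact hθ.symm
    fun_prop (disch := exact hden)
  have hlim :=
    tendsto_nhds_unique (habel.congr' hpower) (hcont.tendsto.mono_left nhdsWithin_le_nhds)
  rw [one_mul, one_mul] at hlim
  rwa [← hlim]

lemma tendsto_sum_pow_mul_sin_mul_div {t θ : ℝ} (ht0 : -1 < t) (ht1 : t ≤ 1)
    (hθ : cos θ ≠ 1) :
    Tendsto (fun N ↦ ∑ n ∈ range N, t ^ n * sin (n * θ) / n) atTop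
      (𝓝 (arctan (t * sin θ / (1 - t * cos θ)))) := by
  rcases ht1.lt_or_eq with ht1 | rfl
  · exact (hasSum_pow_mul_sin_mul_div (abs_lt.mpr ⟨ht0, ht1⟩)).tendsto_sum_nat
  · simpa only [one_pow, one_mul] using tendsto_sum_sin_mul_div hθ

/-- For `0 < t ≤ 1` and `0 < x < 1`,
`∑_{n=1}^∞ tⁿ sin(2πnx)/n = arctan(t sin(2πx) / (1 − t cos(2πx)))`. -/
theorem abel_sum_sin_eq_arctan (t x : ℝ) (ht0 : 0 < t) (ht1 : t ≤ 1)
    (hx0 : 0 < x) (hx1 : x < 1) :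
    Filter.Tendsto
      (fun N => ∑ n ∈ Finset.range N,
        t ^ (n + 1) * Real.sin (2 * Real.pi * (n + 1) * x) / (n + 1))
      Filter.atTop
      (nhds (Real.arctan (t * Real.sin (2 * Real.pi * x)
        / (1 - t * Real.cos (2 * Real.pi * x))))) := by
  have hθ : cos (2 * π * x) ≠ 1 := by
    rw [Ne, cos_eq_one_iff_of_lt_of_lt (by nlinarith [pi_pos]) (by nlinarith [pi_pos])]
    positivity
  have hlim := (tendsto_add_atTop_iff_nat 1).mpr
    (tendsto_sum_pow_mul_sin_mul_div (by linarith) ht1 hθ)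
  refine hlim.congr fun N ↦ ?_
  rw [sum_range_succ']
  simp only [Nat.cast_add, Nat.cast_one, Nat.cast_zero, zero_mul, sin_zero, mul_zero,
    zero_div, add_zero]
  exact sum_congr rfl fun n _ ↦ by ring_nf
end

section
/- Let δ and t be positive real numbers with δ ≤ 1/3 and t ≤ 1/(1 + 3δ²). Then (1 − t cos(2πδ))/(t sin(2πδ)) − πδ ≤ (π/(2δ))(1/t − 1). -/
open Real

set_option maxHeartbeats 1000000 in
theorem key (v : ℝ) (h0 : 0 < v) (h1 : v ≤ 0.5236) :
    8 * (sin v)^2 * (cos v)^2 + 1.6 * v^2 ≤ 20 * v * sin v * cos v * (1 - 2*(sin v)^2) := by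
  have hv1 : |v| ≤ 1 := by rw [abs_of_pos h0]; linarith
  have hs := Real.sin_bound hv1
  have hc := Real.cos_bound hv1
  rw [abs_of_pos h0, abs_le] at hs hc
  obtain ⟨hs1, hs2⟩ := hs
  obtain ⟨hc1, hc2⟩ := hc
  have hw : v^2 ≤ 0.27416 := by nlinarith
  have hslb : v - 0.194*v^3 ≤ sin v := by nlinarith
  have hsub : sin v ≤ v - 0.139*v^3 := by nlinarith
  have hclb : 1 - 0.515*v^2 ≤ cos v := by nlinarith
  have hcub : cos v ≤ 1 - 0.485*v^2 := by nlinarith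
  have hlspos : 0 < v - 0.194*v^3 := by nlinarith
  have hlcpos : 0 < 1 - 0.515*v^2 := by nlinarith
  have hspos : 0 < sin v := lt_of_lt_of_le hlspos hslb
  have hcpos : 0 < cos v := lt_of_lt_of_le hlcpos hclb
  have hqpos : 0 < 1 - 2*(v - 0.139*v^3)^2 := by nlinarith
  have step1 : 8 * (sin v)^2 * (cos v)^2 ≤ 8 * (v - 0.139*v^3)^2 * (1 - 0.485*v^2)^2 := by
    have h1' : (sin v)^2 ≤ (v - 0.139*v^3)^2 := pow_le_pow_left₀ hspos.le hsub 2
    have h2' : (cos v)^2 ≤ (1 - 0.485*v^2)^2 := pow_le_pow_left₀ hcpos.le hcub 2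
    have := mul_le_mul h1' h2' (sq_nonneg _) (sq_nonneg _)
    linarith
  have step2 : 20 * v * ((v - 0.194*v^3) * (1 - 0.515*v^2)) * (1 - 2*(v - 0.139*v^3)^2)
      ≤ 20 * v * (sin v * cos v) * (1 - 2*(sin v)^2) := by
    have hsc : (v - 0.194*v^3) * (1 - 0.515*v^2) ≤ sin v * cos v :=
      mul_le_mul hslb hclb hlcpos.le hspos.le
    have hq : 1 - 2*(v - 0.139*v^3)^2 ≤ 1 - 2*(sin v)^2 := by
      have : (sin v)^2 ≤ (v - 0.139*v^3)^2 := pow_le_pow_left₀ hspos.le hsub 2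
      linarith
    have hscpos : 0 < (v - 0.194*v^3) * (1 - 0.515*v^2) := mul_pos hlspos hlcpos
    have h20v : (0:ℝ) < 20 * v := by linarith
    have := mul_le_mul (mul_le_mul_of_nonneg_left hsc h20v.le) hq hqpos.le
      (by positivity : (0:ℝ) ≤ 20 * v * (sin v * cos v))
    linarith
  have final : 8 * (v - 0.139*v^3)^2 * (1 - 0.485*v^2)^2 + 1.6 * v^2
      ≤ 20 * v * ((v - 0.194*v^3) * (1 - 0.515*v^2)) * (1 - 2*(v - 0.139*v^3)^2) := by
    nlinarith [sq_nonneg v, mul_pos h0 h0, sq_nonneg (0.27416 - v^2),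
      mul_nonneg (mul_nonneg (sq_nonneg v) (sq_nonneg v)) (sub_nonneg.2 hw),
      mul_nonneg (sub_nonneg.2 hw) (sub_nonneg.2 hw), sq_nonneg (v^3), sq_nonneg (v^4)]
  calc 8 * (sin v)^2 * (cos v)^2 + 1.6 * v^2
      ≤ 8 * (v - 0.139*v^3)^2 * (1 - 0.485*v^2)^2 + 1.6 * v^2 := by linarith
    _ ≤ 20 * v * ((v - 0.194*v^3) * (1 - 0.515*v^2)) * (1 - 2*(v - 0.139*v^3)^2) := final
    _ ≤ 20 * v * (sin v * cos v) * (1 - 2*(sin v)^2) := step2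
    _ = 20 * v * sin v * cos v * (1 - 2*(sin v)^2) := by ring

set_option maxHeartbeats 1000000 in
theorem key2 (v : ℝ) (h0 : 0 < v) (h1 : v ≤ 0.5236) :
    0.102 * v ≤ sin v * cos v * (1 - 2*(sin v)^2) := by
  have hv1 : |v| ≤ 1 := by rw [abs_of_pos h0]; linarith
  have hs := Real.sin_bound hv1
  have hc := Real.cos_bound hv1
  rw [abs_of_pos h0, abs_le] at hs hc
  obtain ⟨hs1, hs2⟩ := hs
  obtain ⟨hc1, hc2⟩ := hc
  have hw : v^2 ≤ 0.27416 := by nlinarith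
  have hslb : v - 0.194*v^3 ≤ sin v := by nlinarith
  have hsub : sin v ≤ v - 0.139*v^3 := by nlinarith
  have hclb : 1 - 0.515*v^2 ≤ cos v := by nlinarith
  have hlspos : 0 < v - 0.194*v^3 := by nlinarith
  have hlcpos : 0 < 1 - 0.515*v^2 := by nlinarith
  have hspos : 0 < sin v := lt_of_lt_of_le hlspos hslb
  have hcpos : 0 < cos v := lt_of_lt_of_le hlcpos hclb
  have hq : 1 - 2*(v - 0.139*v^3)^2 ≤ 1 - 2*(sin v)^2 := by
    have : (sin v)^2 ≤ (v - 0.139*v^3)^2 := pow_le_pow_left₀ hspos.le hsub 2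
    linarith
  have hqpos : 0 < 1 - 2*(v - 0.139*v^3)^2 := by nlinarith
  have hsc : (v - 0.194*v^3) * (1 - 0.515*v^2) ≤ sin v * cos v :=
    mul_le_mul hslb hclb hlcpos.le hspos.le
  have hstep : (v - 0.194*v^3) * (1 - 0.515*v^2) * (1 - 2*(v - 0.139*v^3)^2)
      ≤ sin v * cos v * (1 - 2*(sin v)^2) :=
    mul_le_mul hsc hq hqpos.le (by positivity)
  have : 0.102 * v ≤ (v - 0.194*v^3) * (1 - 0.515*v^2) * (1 - 2*(v - 0.139*v^3)^2) := by
    nlinarith [sq_nonneg v, sq_nonneg (v^2), sq_nonneg (v^3),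
      mul_nonneg (mul_nonneg h0.le h0.le) (sub_nonneg.2 hw),
      mul_nonneg (sub_nonneg.2 hw) (sub_nonneg.2 hw)]
  linarith

set_option maxHeartbeats 1000000 in
/-- For `0 < δ ≤ 1/3` and `0 < t ≤ 1/(1 + 3δ²)`,
`(1 − t cos(2πδ))/(t sin(2πδ)) − πδ ≤ (π/(2δ))(1/t − 1)`. -/
theorem csc_cot_bound (δ t : ℝ) (hδ0 : 0 < δ) (hδ : δ ≤ 1 / 3)
    (ht0 : 0 < t) (ht : t ≤ 1 / (1 + 3 * δ ^ 2)) :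
    (1 - t * Real.cos (2 * Real.pi * δ)) / (t * Real.sin (2 * Real.pi * δ)) - Real.pi * δ
      ≤ (Real.pi / (2 * δ)) * (1 / t - 1) := by
  have hπl : (3.141592 : ℝ) < π := Real.pi_gt_d6
  have hπu : π < 3.141593 := Real.pi_lt_d6
  have hπ2l : (9.8696:ℝ) ≤ π^2 := by nlinarith
  have hπ2u : π^2 ≤ 9.8697 := by nlinarith
  set v : ℝ := π * δ / 2 with hv
  have hv0 : 0 < v := by rw [hv]; positivity
  have hv1 : v ≤ 0.5236 := by rw [hv]; nlinarith
  have hpyth := Real.sin_sq_add_cos_sq v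
  set s := Real.sin v with hsdef
  set c := Real.cos v with hcdef
  have K1 := key v hv0 hv1
  have K2 := key2 v hv0 hv1
  rw [← hsdef, ← hcdef] at K1 K2
  set R : ℝ := s * c * (1 - 2*s^2) with hR
  have hRpos : 0 < R := lt_of_lt_of_le (by linarith) K2
  have hspos : 0 < s := by
    rw [hsdef]; exact Real.sin_pos_of_pos_of_lt_pi hv0 (by linarith)
  have hcpos : 0 < c := by
    rw [hcdef]; exact Real.cos_pos_of_mem_Ioo ⟨by linarith, by linarith⟩
  have hsle : s ≤ v := by rw [hsdef]; exact (Real.sin_lt hv0).le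
  have hcle : c ≤ 1 := by rw [hcdef]; exact Real.cos_le_one v
  have hvR : R ≤ v := by
    nlinarith [mul_nonneg hcpos.le (sq_nonneg s), mul_nonneg hspos.le (mul_nonneg hcpos.le (sq_nonneg s)), sq_nonneg s]
  have hsinx : Real.sin (2 * π * δ) = 4 * R := by
    have h4 : 2 * π * δ = 2 * (2 * v) := by rw [hv]; ring
    rw [h4, Real.sin_two_mul, Real.sin_two_mul, Real.cos_two_mul, ← hsdef, ← hcdef, hR]
    linear_combination (8 * s * c) * hpyth
  have hcosx : Real.cos (2 * π * δ) = 1 - 8 * (s*c)^2 := by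
    have h4 : 2 * π * δ = 2 * (2 * v) := by rw [hv]; ring
    rw [h4, Real.cos_two_mul, Real.cos_two_mul, ← hcdef]
    linear_combination (8 * c^2) * hpyth
  have hD : 0 < t * Real.sin (2 * π * δ) := by rw [hsinx]; positivity
  rw [sub_le_iff_le_add, div_le_iff₀ hD]
  have h1t : t * (1 + 3 * δ^2) ≤ 1 := by
    rw [le_div_iff₀ (by positivity)] at ht; exact ht
  have hv2 : v^2 = π^2 * δ^2 / 4 := by rw [hv]; ring
  have ht2 : π^2 * t + 12 * v^2 * t ≤ π^2 := by
    nlinarith [mul_le_mul_of_nonneg_left h1t (sq_nonneg π)]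
  have h1mt : 0 ≤ 1 - t := by nlinarith [sq_nonneg δ]
  have hrhs : ((π / (2*δ)) * (1/t - 1) + π * δ) * (t * Real.sin (2 * π * δ))
      = (π^2 * (1-t) * R + 8 * v^2 * t * R) / v := by
    rw [hsinx, hv]
    field_simp
    ring
  rw [hcosx, hrhs, le_div_iff₀ hv0]
  -- goal : (1 - t * (1 - 8*(s*c)^2)) * v ≤ π^2*(1-t)*R + 8*v^2*t*R
  have hv2t : (0:ℝ) ≤ v^2 * t := by positivity
  have A1 : 1.2158 * v^2 * t ≤ 1 - t := by
    nlinarith [mul_le_mul_of_nonneg_right hπ2u h1mt]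
  have A2 : 0 ≤ π^2 * R - v := by
    nlinarith [mul_le_mul_of_nonneg_right hπ2l hRpos.le, K2]
  have T1 := mul_le_mul_of_nonneg_right A1 A2
  have T2 : 1.2158 * v^2 * t * (9.8696 * R) ≤ 1.2158 * v^2 * t * (π^2 * R) :=
    mul_le_mul_of_nonneg_left (mul_le_mul_of_nonneg_right hπ2l hRpos.le)
      (by positivity)
  have hK1s : 0 ≤ 20 * v * R - (8 * (s*c)^2 + 1.6 * v^2) := by nlinarith [K1]
  have T3 : 0 ≤ v * t * (20 * v * R - (8 * (s*c)^2 + 1.6 * v^2)) :=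
    mul_nonneg (mul_nonneg hv0.le ht0.le) hK1s
  have T4 : v^2 * t * R ≤ v^2 * t * v := mul_le_mul_of_nonneg_left hvR hv2t
  have T0 : (0:ℝ) ≤ v^2 * t * R := by positivity
  linarith [T1, T2, T3, T4, T0]
end

section
/- Let δ and t be real numbers with 0 < δ ≤ 1/3 and 0 < t ≤ 1/(1 + 3δ²), and let x be a real number with δ ≤ x ≤ 1 − δ. Then |∑_{n=1}^{∞} (1 − t^n) sin(2πnx)/n| ≤ (π/(2δ))(1/t − 1). -/
/-!
The coefficients `(1 - tⁿ)/n = (1 - t)(1 + t + ⋯ + tⁿ⁻¹)/n` are averages of a decreasing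
sequence, hence decrease, and the partial sums of `sin (2πnx)` are bounded by `1 / sin (πx)`
(product-to-sum makes `2 sin (πx) ∑ sin (2πnx)` telescope), which is at most `1/(2δ)` by
Jordan's inequality. Abel summation then bounds every partial sum of the series by `(1 - t)/(2δ)`,
which is at most `(π/(2δ))(1/t - 1)` since `t ≤ 1 < π`.
-/

open Real Finset

theorem abs_sin_pi_mul_mul_abs_sum_sin_le_one (x : ℝ) (N : ℕ) :
    |sin (π * x)| * |∑ n ∈ range N, sin (2 * π * (n + 1) * x)| ≤ 1 := by
  have telescope : 2 * sin (π * x) * ∑ n ∈ range N, sin (2 * π * (n + 1) * x)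
      = cos (π * x) - cos ((2 * N + 1) * π * x) := by
    have h := sum_range_sub' (fun n : ℕ => cos ((2 * n + 1) * π * x)) N
    simp only [Nat.cast_add, Nat.cast_one, Nat.cast_zero, mul_zero, zero_add, one_mul] at h
    rw [← h, mul_sum]
    refine sum_congr rfl fun n _ => ?_
    rw [mul_right_comm, two_mul_sin_mul_sin]
    congr 2 <;> ring
  have hcos : |cos (π * x) - cos ((2 * N + 1) * π * x)| ≤ 2 :=
    (abs_sub _ _).trans (by linarith [abs_cos_le_one (π * x), abs_cos_le_one ((2 * N + 1) * π * x)])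
  rw [← telescope, mul_assoc, abs_mul, abs_two, abs_mul] at hcos
  linarith

theorem sum_range_smul_eq_sum_sub_smul_partialSum {E : Type*} [AddCommGroup E] [Module ℝ E]
    (f : ℕ → ℝ) (g : ℕ → E) (N : ℕ) :
    ∑ n ∈ range N, f n • g n =
      ∑ n ∈ range N, (f n - f (n + 1)) • ∑ i ∈ range (n + 1), g i
        + f N • ∑ i ∈ range N, g i := by
  induction N with
  | zero => simp
  | succ N ih =>
    rw [sum_range_succ, ih, sum_range_succ _ N, sum_range_succ g N, sub_smul, smul_add]
    abel

theorem norm_sum_range_smul_le_of_antitone {E : Type*} [SeminormedAddCommGroup E]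
    [NormedSpace ℝ E] {f : ℕ → ℝ} {g : ℕ → E} {M : ℝ} (hf : Antitone f) (hf0 : ∀ n, 0 ≤ f n)
    (hg : ∀ n, ‖∑ i ∈ range n, g i‖ ≤ M) (N : ℕ) :
    ‖∑ n ∈ range N, f n • g n‖ ≤ f 0 * M := by
  have hstep : ∀ n, 0 ≤ f n - f (n + 1) := fun n => sub_nonneg.2 (hf n.le_succ)
  rw [sum_range_smul_eq_sum_sub_smul_partialSum]
  calc _ ≤ ∑ n ∈ range N, (f n - f (n + 1)) * M + f N * M := by
        refine (norm_add_le _ _).trans (add_le_add ((norm_sum_le _ _).trans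
          (sum_le_sum fun n _ => ?_)) ?_)
        · rw [norm_smul, Real.norm_of_nonneg (hstep n)]
          exact mul_le_mul_of_nonneg_left (hg _) (hstep n)
        · rw [norm_smul, Real.norm_of_nonneg (hf0 N)]
          exact mul_le_mul_of_nonneg_left (hg _) (hf0 N)
    _ = f 0 * M := by rw [← sum_mul, sum_range_sub', ← add_mul, sub_add_cancel]

theorem antitone_one_sub_pow_succ_div {t : ℝ} (ht0 : 0 ≤ t) (ht1 : t ≤ 1) :
    Antitone fun n : ℕ => (1 - t ^ (n + 1)) / (n + 1) := by
  refine antitone_nat_of_succ_le fun n => ?_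
  simp only [← mul_neg_geom_sum, mul_div_assoc, Nat.cast_succ]
  refine mul_le_mul_of_nonneg_left ?_ (sub_nonneg.2 ht1)
  have hmin : (n + 1 : ℝ) * t ^ (n + 1) ≤ ∑ k ∈ range (n + 1), t ^ k := by
    have := card_nsmul_le_sum (range (n + 1)) (t ^ ·) (t ^ (n + 1))
      fun k hk => pow_le_pow_of_le_one ht0 ht1 (mem_range.1 hk).le
    simpa using this
  rw [sum_range_succ, div_le_div_iff₀ (by positivity) (by positivity)]
  nlinarith

theorem two_mul_le_sin_pi_mul {δ x : ℝ} (hδ : 0 ≤ δ) (hx0 : δ ≤ x) (hx1 : x ≤ 1 - δ) :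
    2 * δ ≤ sin (π * x) := by
  have jordan : ∀ y, 0 ≤ y → y ≤ 1 / 2 → 2 * y ≤ sin (π * y) := fun y hy0 hy1 => by
    have h := mul_le_sin (x := π * y) (by positivity) (by nlinarith [pi_pos])
    rwa [← mul_assoc, div_mul_cancel₀ _ pi_ne_zero] at h
  rcases le_total x (1 / 2) with hx | hx
  · linarith [jordan x (hδ.trans hx0) hx]
  · rw [← sin_pi_sub, ← mul_one_sub]
    linarith [jordan (1 - x) (by linarith) (by linarith)]

theorem tail_sin_series_bound_general (δ t x : ℝ) (hδ0 : 0 < δ)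
    (ht0 : 0 < t) (ht : t ≤ 1 / (1 + 3 * δ ^ 2))
    (hx0 : δ ≤ x) (hx1 : x ≤ 1 - δ) (L : ℝ)
    (hL : Filter.Tendsto
      (fun N => ∑ n ∈ Finset.range N,
        (1 - t ^ (n + 1)) * Real.sin (2 * Real.pi * (n + 1) * x) / (n + 1))
      Filter.atTop (nhds L)) :
    |L| ≤ (Real.pi / (2 * δ)) * (1 / t - 1) := by
  have ht1 : t ≤ 1 := ht.trans (div_le_one_of_le₀ (by nlinarith) (by positivity))
  have hsin : 2 * δ ≤ sin (π * x) := two_mul_le_sin_pi_mul hδ0.le hx0 hx1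
  have hpartial : ∀ N : ℕ, ‖∑ n ∈ range N, sin (2 * π * (n + 1) * x)‖ ≤ 1 / (2 * δ) := by
    intro N
    have h := abs_sin_pi_mul_mul_abs_sum_sin_le_one x N
    rw [abs_of_pos (by linarith)] at h
    rw [Real.norm_eq_abs, le_div_iff₀ (by positivity)]
    nlinarith [abs_nonneg (∑ n ∈ range N, sin (2 * π * (n + 1) * x))]
  have hcoeff_nonneg : ∀ n : ℕ, 0 ≤ (1 - t ^ (n + 1)) / (n + 1) := fun n =>
    div_nonneg (sub_nonneg.2 (pow_le_one₀ ht0.le ht1)) (by positivity)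
  have hbound : ∀ N : ℕ, |∑ n ∈ range N,
      (1 - t ^ (n + 1)) * sin (2 * π * (n + 1) * x) / (n + 1)| ≤ (1 - t) * (1 / (2 * δ)) := by
    intro N
    have h := norm_sum_range_smul_le_of_antitone (antitone_one_sub_pow_succ_div ht0.le ht1)
      hcoeff_nonneg hpartial N
    simpa only [smul_eq_mul, mul_div_right_comm, Real.norm_eq_abs, zero_add, pow_one,
      Nat.cast_zero, div_one] using h
  calc |L| ≤ (1 - t) * (1 / (2 * δ)) := le_of_tendsto' hL.abs hbound
    _ = (1 / t - 1) * (t / (2 * δ)) := by field_simp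
    _ ≤ (1 / t - 1) * (π / (2 * δ)) := by
      have : 0 ≤ 1 / t - 1 := sub_nonneg.2 (one_le_one_div ht0 ht1)
      gcongr
      linarith [pi_gt_three]
    _ = (π / (2 * δ)) * (1 / t - 1) := mul_comm _ _

/-- For `0 < δ ≤ 1/3`, `0 < t ≤ 1/(1 + 3δ²)`, and `δ ≤ x ≤ 1 − δ`,
`|∑_{n=1}^∞ (1 − tⁿ) sin(2πnx)/n| ≤ (π/(2δ))(1/t − 1)`. -/
theorem tail_sin_series_bound (δ t x : ℝ) (hδ0 : 0 < δ) (hδ : δ ≤ 1 / 3)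
    (ht0 : 0 < t) (ht : t ≤ 1 / (1 + 3 * δ ^ 2))
    (hx0 : δ ≤ x) (hx1 : x ≤ 1 - δ) (L : ℝ)
    (hL : Filter.Tendsto
      (fun N => ∑ n ∈ Finset.range N,
        (1 - t ^ (n + 1)) * Real.sin (2 * Real.pi * (n + 1) * x) / (n + 1))
      Filter.atTop (nhds L)) :
    |L| ≤ (Real.pi / (2 * δ)) * (1 / t - 1) :=
  tail_sin_series_bound_general δ t x hδ0 ht0 ht hx0 hx1 L hL
end

section
/- Let t be a real number with 0 < t < 1 and let x be a real number with 0 < x < 1. Then |∑_{n=1}^{∞} (1 − t^n) sin(2πnx)/n| ≤ π/2. -/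
/-!
Abel's theorem reduces the claim to the bound `|∑ (1 - tⁿ) sin(nθ)/n rⁿ| ≤ π/2` for `0 ≤ r < 1`.
With `z = r e^{iθ}`, that power series is the imaginary part of `log (1 - t z) - log (1 - z)`,
i.e. `arg (1 - t z) - arg (1 - z)`. Both points lie in the closed right half-plane, so each argument
lies in `[-π/2, π/2]`, and their imaginary parts `-t r sin θ` and `-r sin θ` have the same sign, so
the two arguments lie in the same half of that interval.
-/

open Filter Finset Topology Complex

lemma tendsto_sum_range_of_tendsto_sum_range_succ {M : Type*} [AddCommMonoid M]
    [TopologicalSpace M] [ContinuousAdd M] {f : ℕ → M} {L : M}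
    (h : Tendsto (fun N => ∑ n ∈ range N, f (n + 1)) atTop (𝓝 L)) :
    Tendsto (fun N => ∑ n ∈ range N, f n) atTop (𝓝 (f 0 + L)) := by
  refine (tendsto_add_atTop_iff_nat 1).1 ?_
  simp_rw [sum_range_succ', add_comm _ (f 0)]
  exact tendsto_const_nhds.add h

namespace Complex

lemma arg_nonpos_of_re_nonneg_of_im_nonpos {z : ℂ} (hre : 0 ≤ z.re) (him : z.im ≤ 0) :
    arg z ≤ 0 := by
  rcases him.lt_or_eq with him | him
  · exact (arg_neg_iff.2 him).le
  · exact (arg_eq_zero_iff.2 ⟨hre, him⟩).le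

lemma abs_arg_sub_arg_le_pi_div_two {u v : ℂ} (hu : 0 ≤ u.re) (hv : 0 ≤ v.re)
    (huv : 0 ≤ u.im * v.im) : |arg u - arg v| ≤ Real.pi / 2 := by
  obtain ⟨hu₁, hu₂⟩ := abs_le.1 (abs_arg_le_pi_div_two_iff.2 hu)
  obtain ⟨hv₁, hv₂⟩ := abs_le.1 (abs_arg_le_pi_div_two_iff.2 hv)
  rw [abs_le]
  rcases mul_nonneg_iff.1 huv with ⟨hui, hvi⟩ | ⟨hui, hvi⟩
  · have := arg_nonneg_iff.2 hui
    have := arg_nonneg_iff.2 hvi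
    constructor <;> linarith
  · have := arg_nonpos_of_re_nonneg_of_im_nonpos hu hui
    have := arg_nonpos_of_re_nonneg_of_im_nonpos hv hvi
    constructor <;> linarith

lemma re_one_sub_nonneg {z : ℂ} (hz : ‖z‖ ≤ 1) : 0 ≤ (1 - z).re := by
  rw [sub_re, one_re, sub_nonneg]
  exact (re_le_norm z).trans hz

lemma abs_arg_one_sub_mul_sub_arg_one_sub_le {c : ℝ} {z : ℂ} (hc₀ : 0 ≤ c) (hc₁ : c ≤ 1)
    (hz : ‖z‖ ≤ 1) : |arg (1 - c * z) - arg (1 - z)| ≤ Real.pi / 2 := by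
  have hcz : ‖(c : ℂ) * z‖ ≤ 1 := by
    rw [norm_mul, norm_real, Real.norm_of_nonneg hc₀]
    exact mul_le_one₀ hc₁ (norm_nonneg z) hz
  refine abs_arg_sub_arg_le_pi_div_two (re_one_sub_nonneg hcz) (re_one_sub_nonneg hz) ?_
  have : (1 - c * z).im * (1 - z).im = c * z.im ^ 2 := by
    simp only [sub_im, one_im, im_ofReal_mul]
    ring
  rw [this]
  positivity

lemma hasSum_one_sub_pow_mul_pow_div {c z : ℂ} (hc : ‖c‖ ≤ 1) (hz : ‖z‖ < 1) :
    HasSum (fun n : ℕ => (1 - c ^ n) * z ^ n / n) (log (1 - c * z) - log (1 - z)) := by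
  have hcz : ‖c * z‖ < 1 := by
    rw [norm_mul]
    exact (mul_le_of_le_one_left (norm_nonneg z) hc).trans_lt hz
  rw [show log (1 - c * z) - log (1 - z) = -log (1 - z) - -log (1 - c * z) by ring]
  refine ((hasSum_taylorSeries_neg_log hz).sub (hasSum_taylorSeries_neg_log hcz)).congr_fun
    fun n => ?_
  rw [mul_pow]
  ring

lemma im_one_sub_pow_mul_pow_div (t r θ : ℝ) (n : ℕ) :
    ((1 - (t : ℂ) ^ n) * (r * exp (θ * I)) ^ n / n).im
      = (1 - t ^ n) * Real.sin (n * θ) / n * r ^ n := by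
  have : (1 - (t : ℂ) ^ n) * (r * exp (θ * I)) ^ n / n
      = (((1 - t ^ n) / n * r ^ n : ℝ) : ℂ) * exp ((n * θ : ℝ) * I) := by
    rw [mul_pow, ← exp_nat_mul]
    push_cast
    ring_nf
  rw [this, im_ofReal_mul, exp_ofReal_mul_I_im]
  ring

end Complex

lemma abs_tsum_one_sub_pow_mul_sin_div_mul_pow_le (θ : ℝ) {t r : ℝ} (ht₀ : 0 ≤ t) (ht₁ : t ≤ 1)
    (hr₀ : 0 ≤ r) (hr₁ : r < 1) :
    |∑' n : ℕ, (1 - t ^ n) * Real.sin (n * θ) / n * r ^ n| ≤ Real.pi / 2 := by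
  set z : ℂ := r * exp (θ * I)
  have hz : ‖z‖ = r := by
    rw [norm_mul, norm_exp_ofReal_mul_I, mul_one, norm_real, Real.norm_of_nonneg hr₀]
  have ht : ‖(t : ℂ)‖ ≤ 1 := by rwa [norm_real, Real.norm_of_nonneg ht₀]
  have hsum := hasSum_im (hasSum_one_sub_pow_mul_pow_div ht (hz.trans_lt hr₁))
  simp only [im_one_sub_pow_mul_pow_div, sub_im, log_im, z] at hsum
  rw [hsum.tsum_eq]
  exact abs_arg_one_sub_mul_sub_arg_one_sub_le ht₀ ht₁ (hz.trans_le hr₁.le)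

theorem tail_sin_series_le_pi_div_two_general (t x : ℝ) (ht0 : 0 < t) (ht1 : t < 1) (L : ℝ)
    (hL : Filter.Tendsto
      (fun N => ∑ n ∈ Finset.range N,
        (1 - t ^ (n + 1)) * Real.sin (2 * Real.pi * (n + 1) * x) / (n + 1))
      Filter.atTop (nhds L)) :
    |L| ≤ Real.pi / 2 := by
  have hpartial : Tendsto
      (fun N => ∑ n ∈ range N, (1 - t ^ n) * Real.sin (n * (2 * Real.pi * x)) / n)
      atTop (𝓝 L) := by
    simpa using tendsto_sum_range_of_tendsto_sum_range_succ
      (f := fun n : ℕ => (1 - t ^ n) * Real.sin (n * (2 * Real.pi * x)) / n)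
      (hL.congr fun N => sum_congr rfl fun n _ => by push_cast; ring_nf)
  refine le_of_tendsto (Real.tendsto_tsum_powerSeries_nhdsWithin_lt hpartial).abs ?_
  filter_upwards [Ioo_mem_nhdsLT zero_lt_one] with r hr
  exact abs_tsum_one_sub_pow_mul_sin_div_mul_pow_le _ ht0.le ht1.le hr.1.le hr.2

/-- For `0 < t < 1` and `0 < x < 1`, `|∑_{n=1}^∞ (1 − tⁿ) sin(2πnx)/n| ≤ π/2`. -/
theorem tail_sin_series_le_pi_div_two (t x : ℝ) (ht0 : 0 < t) (ht1 : t < 1)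
    (hx0 : 0 < x) (hx1 : x < 1) (L : ℝ)
    (hL : Filter.Tendsto
      (fun N => ∑ n ∈ Finset.range N,
        (1 - t ^ (n + 1)) * Real.sin (2 * Real.pi * (n + 1) * x) / (n + 1))
      Filter.atTop (nhds L)) :
    |L| ≤ Real.pi / 2 :=
  tail_sin_series_le_pi_div_two_general t x ht0 ht1 L hL
end

section
/- The function x ↦ x·csc(2πx) is strictly increasing on the interval (0, 1/3). -/
/-!
Writing `t = 2πx`, the function is `(2π)⁻¹ · t / sin t`. Since `sin` is strictly concave on
`[0, π]` and vanishes at `0`, its secant slope `sin t / t` through the origin is strictly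
decreasing on `(0, π]`; taking reciprocals, `t / sin t` is strictly increasing on `(0, π)`.
-/

open Real Set

theorem Real.strictAntiOn_sin_div : StrictAntiOn (fun t => sin t / t) (Ioc 0 π) := by
  intro s hs t ht hst
  have hzero : (0 : ℝ) ∈ Icc 0 π := ⟨le_rfl, pi_pos.le⟩
  simpa using strictConcaveOn_sin_Icc.secant_strict_mono hzero (Ioc_subset_Icc_self hs)
    (Ioc_subset_Icc_self ht) hs.1.ne' ht.1.ne' hst

theorem Real.strictMonoOn_div_sin : StrictMonoOn (fun t => t / sin t) (Ioo 0 π) := by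
  intro s hs t ht hst
  have hsin_div_pos : 0 < sin t / t := div_pos (sin_pos_of_pos_of_lt_pi ht.1 ht.2) ht.1
  simpa only [one_div_div] using one_div_lt_one_div_of_lt hsin_div_pos
    (strictAntiOn_sin_div (Ioo_subset_Ioc_self hs) (Ioo_subset_Ioc_self ht) hst)

/-- The function `x ↦ x · csc(2πx)` is strictly increasing on `(0, 1/3)`. -/
theorem strictMonoOn_mul_csc :
    StrictMonoOn (fun x : ℝ => x * (Real.sin (2 * Real.pi * x))⁻¹)
      (Set.Ioo (0 : ℝ) (1 / 3)) := by
  have h2pi : 0 < 2 * π := by positivity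
  have hmaps : MapsTo (fun x => 2 * π * x) (Ioo 0 (1 / 3)) (Ioo 0 π) := fun x hx =>
    ⟨by nlinarith [hx.1], by nlinarith [hx.2]⟩
  have hrescale : StrictMonoOn (fun x => (2 * π)⁻¹ * (2 * π * x / sin (2 * π * x)))
      (Ioo 0 (1 / 3)) := fun x hx y hy hxy =>
    mul_lt_mul_of_pos_left (strictMonoOn_div_sin (hmaps hx) (hmaps hy)
      (mul_lt_mul_of_pos_left hxy h2pi)) (inv_pos.2 h2pi)
  refine hrescale.congr fun x _ => ?_
  field_simp
end
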